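/- Let x ∈ ℤ with |x| ≥ 4 and A = (0 −1; 1 x) ∈ GL₂ℤ. Then the subgroup H_A of GL₂ℤ generated by A and −Id acts transitively on the set S_A = {v ∈ ℤ² : ℤv + ℤ(Av) = ℤ²}. -/

import Mathlib

open Matrix

abbrev GL2Z := GL (Fin 2) ℤ

/-- `S_A = {v ∈ ℤ² : ℤv + ℤ(Av) = ℤ²}`. -/
def SA (A : GL2Z) : Set (Fin 2 → ℤ) :=
  {v | Submodule.span ℤ {v, (A : Matrix (Fin 2) (Fin 2) ℤ).mulVec v} = ⊤}

/-- `H_A = ⟨A, -Id⟩ ≤ GL₂ℤ`. -/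
def HA (A : GL2Z) : Subgroup GL2Z := Subgroup.closure {A, -1}

/-!
For `A = (0 -1; 1 x)` the determinant of `(v, Av)` is the binary quadratic form
`Q v = v₀² + x v₀ v₁ + v₁²`, so `v ∈ S_A` forces `Q v = ±1`, and `Q` is `A`-invariant.
When `|x| ≥ 4` the form takes no unit value with `|v₀| = |v₁| ≠ 0`; otherwise applying `A`
(if `|v₁| < |v₀|`) or `A⁻¹` (if `|v₀| < |v₁|`) strictly lowers `|v₀| + |v₁|`, because
`v₀ (v₀ + x v₁) = Q v - v₁²`. The descent ends at `(±1, 0)`, so every vector of `S_A` lies in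
the `H_A`-orbit of `e₀`.
-/

open MulAction

lemma isUnit_det_of_span_pair_eq_top {v w : Fin 2 → ℤ} (h : Submodule.span ℤ {v, w} = ⊤) :
    IsUnit (v 0 * w 1 - v 1 * w 0) := by
  have h₀ : (Pi.single 0 1 : Fin 2 → ℤ) ∈ Submodule.span ℤ {v, w} := h ▸ Submodule.mem_top
  have h₁ : (Pi.single 1 1 : Fin 2 → ℤ) ∈ Submodule.span ℤ {v, w} := h ▸ Submodule.mem_top
  obtain ⟨p, q, hpq⟩ := Submodule.mem_span_pair.mp h₀
  obtain ⟨r, s, hrs⟩ := Submodule.mem_span_pair.mp h₁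
  have e₀ : p * v 0 + q * w 0 = 1 := by simpa using congrFun hpq 0
  have e₁ : p * v 1 + q * w 1 = 0 := by simpa using congrFun hpq 1
  have e₂ : r * v 1 + s * w 1 = 1 := by simpa using congrFun hrs 1
  refine .of_mul_eq_one (p * s - q * r) ?_
  linear_combination (r * v 1 + s * w 1) * e₀ - (r * v 0 + s * w 0) * e₁ + e₂

lemma abs_add_mul_lt_of_isUnit {x a b : ℤ} (hQ : IsUnit (a ^ 2 + x * a * b + b ^ 2))
    (hb : b ≠ 0) (hba : |b| < |a|) : |a + x * b| < |a| := by
  have hε : |a ^ 2 + x * a * b + b ^ 2| = 1 := by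
    rcases Int.isUnit_iff.mp hQ with h | h <;> simp [h]
  have hprod : |a| * |a + x * b| ≤ b ^ 2 + 1 := by
    rw [← abs_mul, show a * (a + x * b) = (a ^ 2 + x * a * b + b ^ 2) - b ^ 2 by ring]
    calc _ ≤ |a ^ 2 + x * a * b + b ^ 2| + |b ^ 2| := abs_sub _ _
      _ = b ^ 2 + 1 := by rw [hε, abs_of_nonneg (sq_nonneg b)]; ring
  have hb1 : 1 ≤ |b| := Int.one_le_abs hb
  nlinarith [sq_abs b]

lemma not_isUnit_of_abs_eq {x a b : ℤ} (hx : 4 ≤ |x|) (ha : a ≠ 0) (hab : |a| = |b|) :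
    ¬ IsUnit (a ^ 2 + x * a * b + b ^ 2) := by
  intro hQ
  have hb : b ^ 2 = a ^ 2 := by rw [← sq_abs b, ← hab, sq_abs]
  have hxab : |x * a * b| = |x| * a ^ 2 := by
    rw [abs_mul, abs_mul, mul_assoc, ← hab, ← sq, sq_abs]
  have ha2 : 1 ≤ a ^ 2 := by nlinarith [Int.one_le_abs ha, sq_abs a]
  rcases Int.isUnit_iff.mp hQ with h | h <;> rcases abs_cases (x * a * b) with ⟨h', _⟩ | ⟨h', _⟩ <;>
    nlinarith

def quadForm (x : ℤ) (v : Fin 2 → ℤ) : ℤ := v 0 ^ 2 + x * v 0 * v 1 + v 1 ^ 2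

lemma orbit_smul_of_mem {G α : Type*} [Group G] [MulAction G α] {H : Subgroup G} {g : G}
    (hg : g ∈ H) (v : α) : orbit H (g • v) = orbit H v :=
  orbit_smul (⟨g, hg⟩ : H) v

lemma orbit_eq_orbit_single_of_snd_eq_zero {A : GL2Z} {v : Fin 2 → ℤ} (h₀ : IsUnit (v 0))
    (h₁ : v 1 = 0) : orbit (HA A) v = orbit (HA A) (Pi.single 0 1 : Fin 2 → ℤ) := by
  rcases Int.isUnit_iff.mp h₀ with h₀ | h₀
  · congr; ext i; fin_cases i <;> simp [h₀, h₁]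
  · have hneg : (-1 : GL2Z) ∈ HA A := Subgroup.subset_closure (Set.mem_insert_of_mem _ rfl)
    rw [← orbit_smul_of_mem hneg v]
    congr; ext i; fin_cases i <;> simp [h₀, h₁]

section

variable {x : ℤ} {A : GL2Z}

lemma smul_eq_of_coe_eq (hA : (A : Matrix (Fin 2) (Fin 2) ℤ) = !![0, -1; 1, x])
    (v : Fin 2 → ℤ) : A • v = ![-v 1, v 0 + x * v 1] := by
  change (A : Matrix (Fin 2) (Fin 2) ℤ) *ᵥ v = _
  ext i; fin_cases i <;> simp [hA, mulVec, dotProduct, Fin.sum_univ_two]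

lemma inv_smul_eq_of_coe_eq (hA : (A : Matrix (Fin 2) (Fin 2) ℤ) = !![0, -1; 1, x])
    (v : Fin 2 → ℤ) : A⁻¹ • v = ![x * v 0 + v 1, -v 0] := by
  rw [inv_smul_eq_iff, smul_eq_of_coe_eq hA]
  ext i; fin_cases i <;> simp

lemma quadForm_smul (hA : (A : Matrix (Fin 2) (Fin 2) ℤ) = !![0, -1; 1, x])
    (v : Fin 2 → ℤ) : quadForm x (A • v) = quadForm x v := by
  simp only [quadForm, smul_eq_of_coe_eq hA, cons_val_zero, cons_val_one, cons_val_fin_one]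
  ring

lemma quadForm_inv_smul (hA : (A : Matrix (Fin 2) (Fin 2) ℤ) = !![0, -1; 1, x])
    (v : Fin 2 → ℤ) : quadForm x (A⁻¹ • v) = quadForm x v := by
  rw [← quadForm_smul hA, smul_inv_smul]

lemma isUnit_quadForm_of_mem_SA (hA : (A : Matrix (Fin 2) (Fin 2) ℤ) = !![0, -1; 1, x])
    {v : Fin 2 → ℤ} (hv : v ∈ SA A) : IsUnit (quadForm x v) := by
  have h := isUnit_det_of_span_pair_eq_top hv
  change IsUnit (v 0 * (A • v) 1 - v 1 * (A • v) 0) at h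
  convert h using 1
  simp only [quadForm, smul_eq_of_coe_eq hA, cons_val_zero, cons_val_one, cons_val_fin_one]
  ring

lemma orbit_eq_orbit_single_of_isUnit (hx : 4 ≤ |x|)
    (hA : (A : Matrix (Fin 2) (Fin 2) ℤ) = !![0, -1; 1, x]) (v : Fin 2 → ℤ)
    (hv : IsUnit (quadForm x v)) :
    orbit (HA A) v = orbit (HA A) (Pi.single 0 1 : Fin 2 → ℤ) := by
  have hAmem : A ∈ HA A := Subgroup.subset_closure (Set.mem_insert _ _)
  induction h : (v 0).natAbs + (v 1).natAbs using Nat.strong_induction_on generalizing v with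
  | _ n ih =>
  have ih' : ∀ w : Fin 2 → ℤ, |w 0| + |w 1| < |v 0| + |v 1| → IsUnit (quadForm x w) →
      orbit (HA A) w = orbit (HA A) (Pi.single 0 1 : Fin 2 → ℤ) := fun w hlt hw ↦
    ih _ (by simp only [← Int.natCast_natAbs] at hlt; omega) w hw rfl
  have hQ : IsUnit (v 0 ^ 2 + x * v 0 * v 1 + v 1 ^ 2) := hv
  rcases eq_or_ne (v 1) 0 with hb | hb
  · exact orbit_eq_orbit_single_of_snd_eq_zero (by simpa [hb] using hQ) hb
  rcases eq_or_ne (v 0) 0 with ha | ha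
  · rw [← orbit_smul_of_mem (inv_mem hAmem) v]
    refine orbit_eq_orbit_single_of_snd_eq_zero ?_ (by simp [inv_smul_eq_of_coe_eq hA, ha])
    simpa [inv_smul_eq_of_coe_eq hA, ha] using hQ
  rcases lt_trichotomy |v 0| |v 1| with hlt | heq | hgt
  · rw [← orbit_smul_of_mem (inv_mem hAmem) v]
    refine ih' _ ?_ (quadForm_inv_smul hA v ▸ hv)
    have := abs_add_mul_lt_of_isUnit (x := x) (by convert hQ using 1; ring) ha hlt
    simp only [inv_smul_eq_of_coe_eq hA, cons_val_zero, cons_val_one, cons_val_fin_one, abs_neg,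
      add_comm (x * v 0)]
    linarith
  · exact absurd hQ (not_isUnit_of_abs_eq hx ha heq)
  · rw [← orbit_smul_of_mem hAmem v]
    refine ih' _ ?_ (quadForm_smul hA v ▸ hv)
    have := abs_add_mul_lt_of_isUnit hQ hb hgt
    simp only [smul_eq_of_coe_eq hA, cons_val_zero, cons_val_one, cons_val_fin_one, abs_neg]
    linarith

end

theorem case_abs_x_ge_four (x : ℤ) (hx : 4 ≤ |x|) (A : GL2Z)
    (hA : (A : Matrix (Fin 2) (Fin 2) ℤ) = !![0, -1; 1, x]) :
    ∀ v ∈ SA A, ∀ w ∈ SA A,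
      ∃ B ∈ HA A, (B : Matrix (Fin 2) (Fin 2) ℤ).mulVec v = w := by
  intro v hv w hw
  have hvw : w ∈ orbit (HA A) v := by
    rw [orbit_eq_orbit_single_of_isUnit hx hA v (isUnit_quadForm_of_mem_SA hA hv),
      ← orbit_eq_orbit_single_of_isUnit hx hA w (isUnit_quadForm_of_mem_SA hA hw)]
    exact mem_orbit_self w
  obtain ⟨⟨B, hB⟩, rfl⟩ := hvw
  exact ⟨B, hB, rfl⟩
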